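/- arXiv:2407.12778 — 4 statements merged into one kernel-verified Lean document; each statement's English description precedes it below -/
import Mathlib

section
/- For every λ ∈ ℂ, the 2-cocycle γ on g_λ defined by γ(L_n, L_m) = (1/12) n(n²−1) δ⁰_{n+m} and γ(L_n, M_m) = γ(M_n, M_m) = 0 is not a coboundary: there is no linear functional α : g_λ → ℂ such that γ(x, y) = −α([x, y]) for all x, y ∈ g_λ. -/
noncomputable section

/-- The underlying vector space of `g_λ`: the free `ℂ`-module on `ℤ ⊕ ℤ`,
with `Sum.inl n ↦ L_n` and `Sum.inr n ↦ M_n`. -/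
abbrev Glam : Type := (ℤ ⊕ ℤ) →₀ ℂ

/-- The basis element `L_n` of `g_λ`. -/
def Lgen (n : ℤ) : Glam := Finsupp.single (Sum.inl n) 1

/-- The basis element `M_n` of `g_λ`. -/
def Mgen (n : ℤ) : Glam := Finsupp.single (Sum.inr n) 1

/-- For every `λ ∈ ℂ`, the 2-cocycle `γ` on `g_λ` defined by
`γ(L_n, L_m) = (1/12) n(n²−1) δ⁰_{n+m}` and `γ(L_n, M_m) = γ(M_n, L_m) = γ(M_n, M_m) = 0`
is not a coboundary: there is no linear functional `α : g_λ → ℂ` with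
`γ(x, y) = −α([x, y])` for all `x, y ∈ g_λ`. -/
theorem stmt3 (lam : ℂ) (B : Glam →ₗ[ℂ] Glam →ₗ[ℂ] Glam)
    -- B is the bracket of g_λ:
    (hLL : ∀ n m : ℤ, B (Lgen n) (Lgen m) = ((n : ℂ) - (m : ℂ)) • Lgen (n + m))
    (hLM : ∀ n m : ℤ, B (Lgen n) (Mgen m) = (-((m : ℂ) + lam * (n : ℂ))) • Mgen (n + m))
    (hML : ∀ n m : ℤ, B (Mgen m) (Lgen n) = ((m : ℂ) + lam * (n : ℂ)) • Mgen (n + m))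
    (hMM : ∀ n m : ℤ, B (Mgen n) (Mgen m) = 0)
    -- γ is the (bilinear) Gelfand–Fuchs cocycle pulled back to g_λ:
    (γ : Glam →ₗ[ℂ] Glam →ₗ[ℂ] ℂ)
    (hγLL : ∀ n m : ℤ, γ (Lgen n) (Lgen m) =
      if n + m = 0 then ((n : ℂ) * ((n : ℂ) ^ 2 - 1)) / 12 else 0)
    (hγLM : ∀ n m : ℤ, γ (Lgen n) (Mgen m) = 0)
    (hγML : ∀ n m : ℤ, γ (Mgen n) (Lgen m) = 0)
    (hγMM : ∀ n m : ℤ, γ (Mgen n) (Mgen m) = 0) :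
    ¬ ∃ α : Glam →ₗ[ℂ] ℂ, ∀ x y : Glam, γ x y = - α (B x y) := by
  rintro ⟨α, hα⟩
  have h1 := hα (Lgen 1) (Lgen (-1))
  have h2 := hα (Lgen 2) (Lgen (-2))
  rw [hγLL, hLL] at h1 h2
  simp only [map_smul] at h1 h2
  norm_num at h1 h2
  rw [h1] at h2
  norm_num at h2
end
end

section
/- The bilinear bracket on the complex vector space with basis {L_n, M_n : n ∈ ℤ} ∪ {c_L, c_M} determined by [L_n, L_m] = (n−m) L_{n+m} + (1/12) n(n²−1) δ⁰_{n+m} c_L, [L_n, M_m] = (n−m) M_{n+m} + (1/12) n(n²−1) δ⁰_{n+m} c_M, [M_n, M_m] = 0, with c_L and c_M central, is antisymmetric and satisfies the Jacobi identity, so it defines a Lie algebra (the BMS₃ algebra); equivalently, γ_M(L_n, M_m) = (1/12) n(n²−1) δ⁰_{n+m} (extended by zero on all other pairs of basis elements, antisymmetrically) is a Lie algebra 2-cocycle on g_{λ=−1}. -/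
noncomputable section

/-- The underlying vector space of the BMS₃ algebra: the free `ℂ`-module on
`ℤ ⊕ ℤ ⊕ Bool`, with `Sum.inl n ↦ L_n`, `Sum.inr (Sum.inl n) ↦ M_n`,
`Sum.inr (Sum.inr true) ↦ c_L` and `Sum.inr (Sum.inr false) ↦ c_M`. -/
abbrev BMS : Type := (ℤ ⊕ ℤ ⊕ Bool) →₀ ℂ

/-- The basis element `L_n` of BMS₃. -/
def Lbms (n : ℤ) : BMS := Finsupp.single (Sum.inl n) 1

/-- The basis element `M_n` of BMS₃. -/
def Mbms (n : ℤ) : BMS := Finsupp.single (Sum.inr (Sum.inl n)) 1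

/-- The central basis element `c_L` of BMS₃. -/
def cL : BMS := Finsupp.single (Sum.inr (Sum.inr true)) 1

/-- The central basis element `c_M` of BMS₃. -/
def cM : BMS := Finsupp.single (Sum.inr (Sum.inr false)) 1

noncomputable def Jmap (B : BMS →ₗ[ℂ] BMS →ₗ[ℂ] BMS) : BMS →ₗ[ℂ] BMS →ₗ[ℂ] BMS →ₗ[ℂ] BMS :=
  LinearMap.mk₂ ℂ (fun x y => B x ∘ₗ B y + B y ∘ₗ B.flip x + B.flip (B x y))
    (by intro m₁ m₂ n; ext z; simp; abel)
    (by intro c m n; ext z; simp)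
    (by intro m n₁ n₂; ext z; simp; abel)
    (by intro m c n; ext z; simp)

/-- The bilinear bracket on the space with basis
`{L_n, M_n : n ∈ ℤ} ∪ {c_L, c_M}` determined by
`[L_n, L_m] = (n−m) L_{n+m} + (1/12) n(n²−1) δ⁰_{n+m} c_L`,
`[L_n, M_m] = (n−m) M_{n+m} + (1/12) n(n²−1) δ⁰_{n+m} c_M`, `[M_n, M_m] = 0`,
with `c_L, c_M` central, is antisymmetric and satisfies the Jacobi identity, so it
defines a Lie algebra (the BMS₃ algebra); equivalently
`γ_M(L_n, M_m) = (1/12) n(n²−1) δ⁰_{n+m}` is a Lie algebra 2-cocycle on `g_{λ=−1}`. -/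
theorem stmt4 (B : BMS →ₗ[ℂ] BMS →ₗ[ℂ] BMS)
    (hLL : ∀ n m : ℤ, B (Lbms n) (Lbms m) =
      ((n : ℂ) - (m : ℂ)) • Lbms (n + m) +
        (if n + m = 0 then ((n : ℂ) * ((n : ℂ) ^ 2 - 1)) / 12 else 0) • cL)
    (hLM : ∀ n m : ℤ, B (Lbms n) (Mbms m) =
      ((n : ℂ) - (m : ℂ)) • Mbms (n + m) +
        (if n + m = 0 then ((n : ℂ) * ((n : ℂ) ^ 2 - 1)) / 12 else 0) • cM)
    (hML : ∀ n m : ℤ, B (Mbms m) (Lbms n) =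
      (-((n : ℂ) - (m : ℂ))) • Mbms (n + m) +
        (if n + m = 0 then -(((n : ℂ) * ((n : ℂ) ^ 2 - 1)) / 12) else 0) • cM)
    (hMM : ∀ n m : ℤ, B (Mbms n) (Mbms m) = 0)
    (hcLl : ∀ x : BMS, B cL x = 0) (hcLr : ∀ x : BMS, B x cL = 0)
    (hcMl : ∀ x : BMS, B cM x = 0) (hcMr : ∀ x : BMS, B x cM = 0) :
    (∀ x y : BMS, B x y = - B y x) ∧
    (∀ x y z : BMS, B x (B y z) + B y (B z x) + B z (B x y) = 0) := by

  have eL : ∀ a : ℤ, (Finsupp.single (Sum.inl a) 1 : BMS) = Lbms a := fun _ => rfl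
  have eM : ∀ a : ℤ, (Finsupp.single (Sum.inr (Sum.inl a)) 1 : BMS) = Mbms a := fun _ => rfl
  have ecL : (Finsupp.single (Sum.inr (Sum.inr true)) 1 : BMS) = cL := rfl
  have ecM : (Finsupp.single (Sum.inr (Sum.inr false)) 1 : BMS) = cM := rfl
  constructor
  · suffices h : B + B.flip = 0 by
      intro x y
      have h2 := LinearMap.congr_fun (LinearMap.congr_fun h x) y
      simp only [LinearMap.add_apply, LinearMap.flip_apply, LinearMap.zero_apply] at h2
      exact eq_neg_of_add_eq_zero_left h2
    ext i j : 4
    simp only [LinearMap.add_apply, LinearMap.flip_apply, LinearMap.zero_apply,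
      LinearMap.comp_apply, Finsupp.lsingle_apply]
    rcases i with n | n | (_ | _) <;> rcases j with m | m | (_ | _) <;>
      try simp only [eL, eM, ecL, ecM, hLL, hLM, hML, hMM, hcLl, hcLr, hcMl, hcMr, add_zero, zero_add,
        smul_zero, neg_smul, neg_neg]
    · -- L L
      rw [show m + n = n + m from by ring]
      by_cases h : n + m = 0
      · obtain rfl : m = -n := by omega
        simp only [if_pos h]; push_cast; module
      · simp only [if_neg h]; module
    · -- L M
      by_cases h : n + m = 0
      · simp only [if_pos h]; module
      · simp only [if_neg h]; module
    · -- M L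
      by_cases h : m + n = 0
      · simp only [if_pos h]; module
      · simp only [if_neg h]; module

  · suffices h : Jmap B = 0 by
      intro x y z
      have h2 := LinearMap.congr_fun (LinearMap.congr_fun (LinearMap.congr_fun h x) y) z
      simpa [Jmap, LinearMap.mk₂_apply, LinearMap.add_apply, LinearMap.comp_apply,
        LinearMap.flip_apply] using h2
    ext i j k : 6
    simp only [Jmap, LinearMap.mk₂_apply, LinearMap.add_apply, LinearMap.comp_apply,
      LinearMap.flip_apply, LinearMap.zero_apply, Finsupp.lsingle_apply]
    rcases i with n | n | (_ | _) <;> rcases j with m | m | (_ | _) <;>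
      rcases k with p | p | (_ | _) <;>
      try simp only [eL, eM, ecL, ecM, hLL, hLM, hML, hMM, hcLl, hcLr, hcMl, hcMr, map_add, map_smul,
        map_zero, smul_add, smul_smul, smul_zero, add_zero, zero_add, zero_smul, mul_zero]
    · -- L L L
      rw [show m + (p + n) = n + (m + p) from by ring,
        show p + (n + m) = n + (m + p) from by ring]
      by_cases h : n + (m + p) = 0
      · obtain rfl : p = -n - m := by omega
        simp only [if_pos h]; push_cast; module
      · simp only [if_neg h]; push_cast; module
    · -- L L M
      rw [show m + (n + p) = n + (m + p) from by ring,
        show n + m + p = n + (m + p) from by ring]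
      by_cases h : n + (m + p) = 0
      · obtain rfl : p = -n - m := by omega
        simp only [if_pos h]; push_cast; module
      · simp only [if_neg h]; push_cast; module
    · -- L M L
      rw [show n + (p + m) = n + (m + p) from by ring,
        show p + n + m = n + (m + p) from by ring,
        show p + (n + m) = n + (m + p) from by ring]
      by_cases h : n + (m + p) = 0
      · obtain rfl : p = -n - m := by omega
        simp only [if_pos h]; push_cast; module
      · simp only [if_neg h]; push_cast; module
    · -- M L L
      rw [show m + p + n = n + (m + p) from by ring,
        show m + (p + n) = n + (m + p) from by ring,
        show p + (m + n) = n + (m + p) from by ring]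
      by_cases h : n + (m + p) = 0
      · obtain rfl : p = -n - m := by omega
        simp only [if_pos h]; push_cast; module
      · simp only [if_neg h]; push_cast; module
end
end

section
/- For every integer n ≥ 1 and every λ ∈ ℤ, the finite sum ∑_{i=2}^{n+1} [ (i−2n)(n+i) + (i+(λ−1)n)(i−λn) ] equals −(1/12)(26 + 2(6λ²−6λ+1))(n³−n) + (1/12)(26 − 2(6λ²−6λ+1)) n. (This identity computes the failure [ρ(L_n), ρ(L_{−n})]ω₀ − ρ([L_n, L_{−n}])ω₀ of the semi-infinite wedge action of g_λ on the vacuum, and identifies the central charge of the semi-infinite wedge representation as −(26 + 2(6λ²−6λ+1)) together with the coboundary term absorbed by the choice of β.) -/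
theorem Int.sum_Ico_sub {M : Type*} [AddCommGroup M] (F : ℤ → M) {m k : ℤ} (hmk : m ≤ k) :
    ∑ i ∈ Finset.Ico m k, (F (i + 1) - F i) = F k - F m := by
  induction k, hmk using Int.leInduction with
  | base => simp
  | succ k hmk ih =>
    rw [← Finset.insert_Ico_right_eq_Ico_add_one hmk, Finset.sum_insert Finset.right_notMem_Ico, ih]
    abel

/-- For every integer `n ≥ 1` and every `λ ∈ ℤ`,
`∑_{i=2}^{n+1} [ (i−2n)(n+i) + (i+(λ−1)n)(i−λn) ]
  = −(1/12)(26 + 2(6λ²−6λ+1))(n³−n) + (1/12)(26 − 2(6λ²−6λ+1)) n`,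
an identity of rational numbers.  This computes the failure
`[ρ(L_n), ρ(L_{−n})]ω₀ − ρ([L_n, L_{−n}])ω₀` of the semi-infinite wedge action of
`g_λ` on the vacuum, identifying the central charge `−(26 + 2(6λ²−6λ+1))`. -/
theorem stmt7 (n : ℤ) (hn : 1 ≤ n) (lam : ℤ) :
    ∑ i ∈ Finset.Icc (2 : ℤ) (n + 1),
      (((i : ℚ) - 2 * (n : ℚ)) * ((n : ℚ) + (i : ℚ)) +
        ((i : ℚ) + ((lam : ℚ) - 1) * (n : ℚ)) * ((i : ℚ) - (lam : ℚ) * (n : ℚ)))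
    = -(1 / 12) * (26 + 2 * (6 * (lam : ℚ) ^ 2 - 6 * (lam : ℚ) + 1)) * ((n : ℚ) ^ 3 - (n : ℚ))
      + (1 / 12) * (26 - 2 * (6 * (lam : ℚ) ^ 2 - 6 * (lam : ℚ) + 1)) * (n : ℚ) := by
  -- The summand is `2i² - 2ni + n²(λ - λ² - 2)`, and `F k` is its sum over `0 ≤ i < k`.
  let F : ℤ → ℚ := fun k =>
    ((k : ℚ) - 1) * k * (2 * k - 1) / 3 - n * ((k : ℚ) - 1) * k + n ^ 2 * (lam - lam ^ 2 - 2) * k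
  have hF : ∀ i : ℤ,
      ((i : ℚ) - 2 * n) * (n + i) + (i + (lam - 1) * n) * (i - lam * n) = F (i + 1) - F i := by
    intro i
    simp only [F]
    push_cast
    ring
  rw [Finset.sum_congr rfl fun i _ => hF i, ← Finset.Ico_add_one_right_eq_Icc,
    Int.sum_Ico_sub F (by omega)]
  simp only [F]
  push_cast
  ring
end

section
/- Let K be a field, g = ⊕_{n∈ℤ} g_n a ℤ-graded Lie algebra over K, W = ⊕_{k∈ℤ} W_k a nonzero ℤ-graded K-vector space, ρ : g → End_K(W) a linear map such that ρ(x)(W_k) ⊆ W_{k+m} for every x ∈ g_m and every k ∈ ℤ, and γ : g × g → K a bilinear map such that [ρ(x), ρ(y)] = ρ([x,y]) + γ(x,y)·id_W for all x, y ∈ g. Then γ(x, y) = 0 for all homogeneous x ∈ g_m, y ∈ g_n with m + n ≠ 0. -/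
/-! The defect `γ x y • id` is the commutator of `ρ x` and `ρ y` minus `ρ ⁅x, y⁆`, so, like each
of these, it raises degrees by `m + n`. A nonzero scalar operator preserves every graded piece,
and a nonzero vector cannot lie in two different graded pieces, so `γ x y = 0` when `m + n ≠ 0`. -/

section ShiftsDegree

variable {ι R M : Type*} [AddCommMonoid ι] [Ring R] [AddCommGroup M] [Module R M]

def ShiftsDegree (A : ι → Submodule R M) (m : ι) (f : Module.End R M) : Prop :=
  ∀ k, ∀ w ∈ A k, f w ∈ A (k + m)

variable {A : ι → Submodule R M} {m n : ι} {f g : Module.End R M}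

theorem ShiftsDegree.mul (hf : ShiftsDegree A m f) (hg : ShiftsDegree A n g) :
    ShiftsDegree A (n + m) (f * g) := fun k w hw => by
  simpa only [Module.End.mul_apply, add_assoc] using hf _ _ (hg k w hw)

theorem ShiftsDegree.sub (hf : ShiftsDegree A m f) (hg : ShiftsDegree A m g) :
    ShiftsDegree A m (f - g) := fun k w hw =>
  (A _).sub_mem (hf k w hw) (hg k w hw)

theorem ShiftsDegree.commutator (hf : ShiftsDegree A m f) (hg : ShiftsDegree A n g) :
    ShiftsDegree A (m + n) (f * g - g * f) :=
  (add_comm n m ▸ hf.mul hg).sub (hg.mul hf)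

end ShiftsDegree

theorem DirectSum.IsInternal.exists_ne_bot {ι R M : Type*} [DecidableEq ι] [Semiring R]
    [AddCommGroup M] [Module R M] [Nontrivial M] {A : ι → Submodule R M}
    (hA : DirectSum.IsInternal A) : ∃ i, A i ≠ ⊥ := by
  by_contra! hbot
  exact bot_ne_top (iSup_eq_bot.mpr hbot ▸ hA.submodule_iSup_eq_top)

theorem eq_zero_of_shiftsDegree_smul_one {ι K W : Type*} [DecidableEq ι] [AddCancelCommMonoid ι]
    [Field K] [AddCommGroup W] [Module K W] [Nontrivial W] {A : ι → Submodule K W}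
    (hA : DirectSum.IsInternal A) {d : ι} (hd : d ≠ 0) {c : K}
    (hc : ShiftsDegree A d (c • 1)) : c = 0 := by
  obtain ⟨k, hk⟩ := hA.exists_ne_bot
  obtain ⟨w, hw, hw0⟩ := Submodule.exists_mem_ne_zero_of_ne_bot hk
  have hdisj : Disjoint (A k) (A (k + d)) :=
    hA.submodule_iSupIndep.pairwiseDisjoint (fun h => hd (left_eq_add.mp h))
  have hcw : c • w = 0 :=
    Submodule.disjoint_def.mp hdisj _ ((A k).smul_mem c hw) (hc k w hw)
  exact (smul_eq_zero.mp hcw).resolve_right hw0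

theorem stmt9_general {K : Type*} [Field K] {W : Type*} [AddCommGroup W] [Module K W]
    [Nontrivial W]
    {g : Type*} [LieRing g] [LieAlgebra K g]
    (G : ℤ → Submodule K g)
    (hGbr : ∀ (m n : ℤ), ∀ x ∈ G m, ∀ y ∈ G n, ⁅x, y⁆ ∈ G (m + n))
    (Wg : ℤ → Submodule K W) (hWg : DirectSum.IsInternal Wg)
    (ρ : g →ₗ[K] Module.End K W)
    (hρ : ∀ (m : ℤ), ∀ x ∈ G m, ∀ (k : ℤ), ∀ w ∈ Wg k, ρ x w ∈ Wg (k + m))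
    (γ : g →ₗ[K] g →ₗ[K] K)
    (h : ∀ x y : g,
      ρ x * ρ y - ρ y * ρ x = ρ ⁅x, y⁆ + γ x y • (1 : Module.End K W)) :
    ∀ (m n : ℤ), m + n ≠ 0 → ∀ x ∈ G m, ∀ y ∈ G n, γ x y = 0 := by
  intro m n hmn x hx y hy
  have hdefect : ShiftsDegree Wg (m + n) (γ x y • 1) := by
    have := (ShiftsDegree.commutator (hρ m x hx) (hρ n y hy)).sub
      (hρ _ _ (hGbr m n x hx y hy))
    rwa [h x y, add_sub_cancel_left] at this
  exact eq_zero_of_shiftsDegree_smul_one hWg hmn hdefect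

/-- Let `K` be a field, `g = ⊕_{n∈ℤ} g_n` a `ℤ`-graded Lie algebra over
`K`, `W = ⊕_{k∈ℤ} W_k` a nonzero `ℤ`-graded `K`-vector space, `ρ : g → End_K(W)` a
linear map with `ρ(x)(W_k) ⊆ W_{k+m}` for `x ∈ g_m`, and `γ : g × g → K` bilinear
with `[ρ(x), ρ(y)] = ρ([x,y]) + γ(x,y)·id_W`.  Then `γ(x, y) = 0` for all homogeneous
`x ∈ g_m`, `y ∈ g_n` with `m + n ≠ 0`. -/
theorem stmt9 {K : Type*} [Field K] {W : Type*} [AddCommGroup W] [Module K W]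
    [Nontrivial W]
    {g : Type*} [LieRing g] [LieAlgebra K g]
    (G : ℤ → Submodule K g) (hG : DirectSum.IsInternal G)
    (hGbr : ∀ (m n : ℤ), ∀ x ∈ G m, ∀ y ∈ G n, ⁅x, y⁆ ∈ G (m + n))
    (Wg : ℤ → Submodule K W) (hWg : DirectSum.IsInternal Wg)
    (ρ : g →ₗ[K] Module.End K W)
    (hρ : ∀ (m : ℤ), ∀ x ∈ G m, ∀ (k : ℤ), ∀ w ∈ Wg k, ρ x w ∈ Wg (k + m))
    (γ : g →ₗ[K] g →ₗ[K] K)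
    (h : ∀ x y : g,
      ρ x * ρ y - ρ y * ρ x = ρ ⁅x, y⁆ + γ x y • (1 : Module.End K W)) :
    ∀ (m n : ℤ), m + n ≠ 0 → ∀ x ∈ G m, ∀ y ∈ G n, γ x y = 0 :=
  stmt9_general G hGbr Wg hWg ρ hρ γ h
end
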